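/- Let X be a real normed space, f₁, …, f_n : X → ℝ ∪ {+∞} proper convex functions, and f = max_k f_k. Then for every x with f(x) ∈ ℝ: ∂f(x) = ⋃ { ∂f_λ(x) : λ ∈ Δ_n, f_λ(x) = f(x) }, where f_λ = Σ_k λ_k f_k and ∂g(x) denotes the (exact) convex subdifferential. -/

import Mathlib

/-!
Since `f_λ ≤ f` for every `λ ∈ Δ_n`, a subgradient of an active `f_λ` at `x` is a subgradient
of `f`. Conversely, let `p ∈ ∂f(x)` and `c = f(x)`. The set `D` of `v ∈ ℝⁿ` for which some `y`
satisfies `f_k(y) ≤ v_k + p(y - x)` for all `k` is convex (by convexity of the `f_k`) and misses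
the open orthant `{v | v < c}`, because `c + p(y - x) ≤ max_k f_k(y)`. A hyperplane separating
the two has nonnegative normal, which normalizes to `λ ∈ Δ_n` with `c ≤ ⟨λ, v⟩` on `D`; this says
`c + p(y - x) ≤ f_λ(y)` for all `y`, and at `y = x` it forces `f_λ(x) = f(x)`.
-/

open Filter Topology

def IsConvexEFn {E : Type*} [AddCommGroup E] [Module ℝ E] (g : E → EReal) : Prop :=
  Convex ℝ {p : E × ℝ | g p.1 ≤ (p.2 : EReal)}

/-- Scalar multiplication with the conventions `0·(+∞) = +∞` and `0·(−∞) = 0`. -/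
noncomputable def smul0 (a : ℝ) (v : EReal) : EReal :=
  if a = 0 then (if v = ⊤ then ⊤ else 0) else (a : EReal) * v

/-- The `δ`-subdifferential of `g` at `x`: empty if `δ < 0` or `x ∉ dom g`.
For `δ = 0` this is the exact convex subdifferential. -/
def esubdiff {X : Type*} [NormedAddCommGroup X] [NormedSpace ℝ X]
    (g : X → EReal) (x : X) (δ : ℝ) : Set (X →L[ℝ] ℝ) :=
  {p | 0 ≤ δ ∧ g x ≠ ⊤ ∧ ∀ y, g x + ((p (y - x) : ℝ) : EReal) - (δ : EReal) ≤ g y}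

open Set

namespace EReal

lemma coe_finset_sum {ι : Type*} (s : Finset ι) (r : ι → ℝ) :
    ((∑ i ∈ s, r i : ℝ) : EReal) = ∑ i ∈ s, (r i : EReal) :=
  map_sum (⟨⟨(↑), coe_zero⟩, coe_add⟩ : ℝ →+ EReal) r s

lemma finset_sum_ne_bot {ι : Type*} {s : Finset ι} {g : ι → EReal}
    (hg : ∀ i ∈ s, g i ≠ ⊥) : ∑ i ∈ s, g i ≠ ⊥ := by
  induction s using Finset.cons_induction with
  | empty => simp
  | cons i s hi ih =>
    rw [Finset.sum_cons, Ne, add_eq_bot_iff, not_or]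
    exact ⟨hg i (s.mem_cons_self i), ih fun j hj => hg j (Finset.mem_cons_of_mem hj)⟩

lemma finset_sum_eq_top {ι : Type*} {s : Finset ι} {g : ι → EReal}
    (hg : ∀ i ∈ s, g i ≠ ⊥) {i : ι} (hi : i ∈ s) (hgi : g i = ⊤) : ∑ i ∈ s, g i = ⊤ := by
  classical
  rw [← Finset.add_sum_erase s g hi, hgi]
  exact top_add_of_ne_bot (finset_sum_ne_bot fun j hj => hg j (Finset.mem_of_mem_erase hj))

end EReal

lemma smul0_coe (a r : ℝ) : smul0 a r = ((a * r : ℝ) : EReal) := by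
  by_cases ha : a = 0
  · simp [smul0, ha]
  · rw [smul0, if_neg ha, EReal.coe_mul]

lemma smul0_top {a : ℝ} (ha : 0 ≤ a) : smul0 a ⊤ = ⊤ := by
  rcases ha.eq_or_lt with rfl | ha
  · simp [smul0]
  · rw [smul0, if_neg ha.ne', EReal.mul_top_of_pos (EReal.coe_pos.2 ha)]

lemma smul0_ne_bot {a : ℝ} (ha : 0 ≤ a) {v : EReal} (hv : v ≠ ⊥) : smul0 a v ≠ ⊥ := by
  induction v using EReal.rec with
  | bot => exact absurd rfl hv
  | coe r => rw [smul0_coe]; exact EReal.coe_ne_bot _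
  | top => simp [smul0_top ha]

lemma sum_smul0_coe {ι : Type*} [Fintype ι] (l r : ι → ℝ) :
    ∑ k, smul0 (l k) (r k) = ((∑ k, l k * r k : ℝ) : EReal) := by
  simp only [smul0_coe, EReal.coe_finset_sum]

lemma sum_smul0_eq_top {ι : Type*} [Fintype ι] {l : ι → ℝ} (hl : ∀ k, 0 ≤ l k)
    {g : ι → EReal} (hg : ∀ k, g k ≠ ⊥) {k : ι} (hk : g k = ⊤) :
    ∑ k, smul0 (l k) (g k) = ⊤ :=
  EReal.finset_sum_eq_top (fun j _ => smul0_ne_bot (hl j) (hg j)) (Finset.mem_univ k)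
    (by rw [hk, smul0_top (hl k)])

lemma sum_smul0_le_iSup {ι : Type*} [Fintype ι] {l : ι → ℝ} (hl : l ∈ stdSimplex ℝ ι)
    {g : ι → EReal} (hg : ∀ k, g k ≠ ⊥) : ∑ k, smul0 (l k) (g k) ≤ ⨆ k, g k := by
  by_cases htop : ∃ k, g k = ⊤
  · obtain ⟨k, hk⟩ := htop
    exact le_top.trans (hk ▸ le_iSup g k)
  push Not at htop
  have hr : ∀ k, g k = (g k).toReal := fun k => (EReal.coe_toReal (htop k) (hg k)).symm
  obtain ⟨j, -, hj⟩ := Finset.exists_max_image Finset.univ (fun k => (g k).toReal)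
    (Finset.nonempty_of_sum_ne_zero (hl.2.symm ▸ one_ne_zero))
  calc ∑ k, smul0 (l k) (g k) = ((∑ k, l k * (g k).toReal : ℝ) : EReal) := by
        rw [← sum_smul0_coe]; simp only [← hr]
    _ ≤ ((g j).toReal : EReal) := by
        rw [EReal.coe_le_coe_iff]
        calc ∑ k, l k * (g k).toReal ≤ ∑ k, l k * (g j).toReal :=
              Finset.sum_le_sum fun k hk => mul_le_mul_of_nonneg_left (hj k hk) (hl.1 k)
          _ = (g j).toReal := by rw [← Finset.sum_mul, hl.2, one_mul]
    _ ≤ ⨆ k, g k := hr j ▸ le_iSup g j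

lemma nonneg_of_forall_sub_mul_le {a b u : ℝ} (h : ∀ t, 0 ≤ t → a - t * b ≤ u) : 0 ≤ b := by
  by_contra! hb
  have ha : a ≤ u := by simpa using h 0 le_rfl
  have ht := h ((u - a + 1) / -b) (div_nonneg (by linarith) (by linarith))
  rw [div_mul_eq_mul_div, div_neg, mul_div_cancel_right₀ _ hb.ne] at ht
  linarith

theorem exists_mem_stdSimplex_le_sum_mul {ι : Type*} [Fintype ι] {D : Set (ι → ℝ)}
    (hD : Convex ℝ D) (hDne : D.Nonempty) {c : ℝ} (hc : ∀ v ∈ D, ∃ k, c ≤ v k) :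
    ∃ l ∈ stdSimplex ℝ ι, ∀ v ∈ D, c ≤ ∑ k, l k * v k := by
  classical
  have hdisj : Disjoint (univ.pi fun _ => Iio c) D := disjoint_left.2 fun v hvU hvD => by
    obtain ⟨k, hk⟩ := hc v hvD
    exact (hvU k (mem_univ k)).not_ge hk
  obtain ⟨φ, u, hφU, hφD⟩ := geometric_hahn_banach_open (convex_pi fun _ _ => convex_Iio c)
    (isOpen_set_pi finite_univ fun _ _ => isOpen_Iio) hD hdisj
  set e : ι → ι → ℝ := fun k j => if k = j then 1 else 0
  set μ : ι → ℝ := fun k => φ (e k)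
  have hφ (v : ι → ℝ) : φ v = ∑ k, v k * μ k := by
    simpa using (φ : (ι → ℝ) →ₗ[ℝ] ℝ).pi_apply_eq_sum_univ v
  have hφle (v : ι → ℝ) (hv : ∀ k, v k ≤ c) : φ v ≤ u := by
    have hvU : v ∈ closure (univ.pi fun _ => Iio c) := by
      rw [closure_pi_set]
      simpa [closure_Iio, Pi.le_def] using hv
    exact closure_minimal (fun w hw => (hφU w hw).le)
      (isClosed_le φ.continuous continuous_const) hvU
  have hμ (k : ι) : 0 ≤ μ k := by
    refine nonneg_of_forall_sub_mul_le (a := φ fun _ => c) (u := u) fun t ht => ?_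
    have hφt := hφle ((fun _ => c) - t • e k) fun j => by
      by_cases hkj : k = j <;> simp [e, hkj, ht]
    rwa [map_sub, map_smul, smul_eq_mul] at hφt
  set S := ∑ k, μ k
  have hcS : c * S ≤ u := by
    simpa [hφ, S, Finset.mul_sum] using hφle (fun _ => c) fun _ => le_rfl
  obtain ⟨v₀, hv₀⟩ := hDne
  have hS : 0 < S := by
    refine (Finset.sum_nonneg fun k _ => hμ k).lt_of_ne fun hS0 => ?_
    have hμ0 : ∀ k, μ k = 0 := fun k =>
      (Finset.sum_eq_zero_iff_of_nonneg fun k _ => hμ k).1 hS0.symm k (Finset.mem_univ k)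
    have h1 := hφU (fun _ => c - 1) fun k _ => show c - 1 < c by linarith
    have h2 := hφD v₀ hv₀
    simp only [hφ, hμ0, mul_zero, Finset.sum_const_zero] at h1 h2
    linarith
  refine ⟨fun k => μ k / S, ⟨fun k => div_nonneg (hμ k) hS.le, ?_⟩, fun v hv => ?_⟩
  · rw [← Finset.sum_div, div_self hS.ne']
  · have hcv := (hcS.trans (hφD v hv)).trans_eq (hφ v)
    rw [← le_div_iff₀ hS, Finset.sum_div] at hcv
    refine hcv.trans_eq (Finset.sum_congr rfl fun k _ => ?_)
    ring

section Convex

variable {E F : Type*} [AddCommGroup E] [Module ℝ E] [FunLike F E ℝ] [LinearMapClass F ℝ E ℝ]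

lemma IsConvexEFn.le_combo {g : E → EReal} (hg : IsConvexEFn g) {y z : E} {a b s t : ℝ}
    (hy : g y ≤ a) (hz : g z ≤ b) (hs : 0 ≤ s) (ht : 0 ≤ t) (hst : s + t = 1) :
    g (s • y + t • z) ≤ ((s * a + t * b : ℝ) : EReal) := by
  simpa using hg (show (y, a) ∈ _ from hy) (show (z, b) ∈ _ from hz) hs ht hst

lemma convex_setOf_exists_forall_le {ι : Type*} {f : ι → E → EReal}
    (hf : ∀ k, IsConvexEFn (f k)) (p : F) (x : E) :
    Convex ℝ {v : ι → ℝ | ∃ y, ∀ k, f k y ≤ ((v k + p (y - x) : ℝ) : EReal)} := by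
  rintro v ⟨y, hy⟩ w ⟨z, hz⟩ s t hs ht hst
  refine ⟨s • y + t • z, fun k => ?_⟩
  have hcomb : s • y + t • z - x = s • (y - x) + t • (z - x) := by
    linear_combination (norm := module) hst • x
  convert (hf k).le_combo (hy k) (hz k) hs ht hst using 2
  simp only [hcomb, map_add, map_smul, Pi.add_apply, Pi.smul_apply, smul_eq_mul]
  ring

theorem exists_mem_stdSimplex_forall_le_sum_smul0 {ι : Type*} [Fintype ι] [Nonempty ι]
    {f : ι → E → EReal} (hf_bot : ∀ k y, f k y ≠ ⊥) (hf : ∀ k, IsConvexEFn (f k))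
    {p : F} {x : E} (hx : ∀ k, f k x ≠ ⊤) {c : ℝ}
    (hp : ∀ y, ((c + p (y - x) : ℝ) : EReal) ≤ ⨆ k, f k y) :
    ∃ l ∈ stdSimplex ℝ ι, ∀ y, ((c + p (y - x) : ℝ) : EReal) ≤ ∑ k, smul0 (l k) (f k y) := by
  set D := {v : ι → ℝ | ∃ y, ∀ k, f k y ≤ ((v k + p (y - x) : ℝ) : EReal)}
  have hDne : D.Nonempty := ⟨fun k => (f k x).toReal, x, fun k => by
    simp [EReal.coe_toReal (hx k) (hf_bot k x)]⟩
  have hc : ∀ v ∈ D, ∃ k, c ≤ v k := by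
    rintro v ⟨y, hy⟩
    obtain ⟨k, hk⟩ := exists_eq_ciSup_of_finite (f := fun k => f k y)
    have hck := (hp y).trans (hk ▸ hy k)
    exact ⟨k, le_of_add_le_add_right (EReal.coe_le_coe_iff.1 hck)⟩
  obtain ⟨l, hl, hlD⟩ :=
    exists_mem_stdSimplex_le_sum_mul (convex_setOf_exists_forall_le hf p x) hDne hc
  refine ⟨l, hl, fun y => ?_⟩
  by_cases htop : ∃ k, f k y = ⊤
  · obtain ⟨k, hk⟩ := htop
    rw [sum_smul0_eq_top hl.1 (hf_bot · y) hk]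
    exact le_top
  push Not at htop
  set r : ι → ℝ := fun k => (f k y).toReal
  have hr : ∀ k, f k y = r k := fun k => (EReal.coe_toReal (htop k) (hf_bot k y)).symm
  have hle := hlD (fun k => r k - p (y - x)) ⟨y, fun k => by simp [hr]⟩
  have hsum : ∑ k, l k * (r k - p (y - x)) = ∑ k, l k * r k - p (y - x) := by
    simp [mul_sub, Finset.sum_sub_distrib, ← Finset.sum_mul, hl.2]
  simp only [hr, sum_smul0_coe, EReal.coe_le_coe_iff]
  linarith

end Convex

section Subdifferential

variable {X : Type*} [NormedAddCommGroup X] [NormedSpace ℝ X]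

lemma mem_esubdiff_zero_iff {g : X → EReal} {x : X} {a : ℝ} (hgx : g x = a) {p : X →L[ℝ] ℝ} :
    p ∈ esubdiff g x 0 ↔ ∀ y, ((a + p (y - x) : ℝ) : EReal) ≤ g y := by
  simp [esubdiff, hgx]

lemma esubdiff_subset_of_le_of_eq {g h : X → EReal} {x : X} {δ : ℝ} (hle : ∀ y, g y ≤ h y)
    (hx : g x = h x) : esubdiff g x δ ⊆ esubdiff h x δ :=
  fun _ ⟨hδ, hgx, hp⟩ => ⟨hδ, hx ▸ hgx, fun y => hx ▸ (hp y).trans (hle y)⟩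

end Subdifferential

theorem stmt10_general {X : Type*} [NormedAddCommGroup X] [NormedSpace ℝ X]
    (n : ℕ) (hn : 0 < n) (f : Fin n → X → EReal)
    (hnb : ∀ k x, f k x ≠ ⊥)
    (hconv : ∀ k, IsConvexEFn (f k))
    (x : X) (hx₁ : (⨆ k, f k x) ≠ ⊤) (hx₂ : (⨆ k, f k x) ≠ ⊥) :
    esubdiff (fun z => ⨆ k, f k z) x 0 =
      ⋃ l ∈ {l : Fin n → ℝ | (∀ k, 0 ≤ l k) ∧ (∑ k, l k = 1) ∧
          (∑ k, smul0 (l k) (f k x)) = ⨆ k, f k x},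
        esubdiff (fun z => ∑ k, smul0 (l k) (f k z)) x 0 := by
  have : Nonempty (Fin n) := ⟨⟨0, hn⟩⟩
  have hc : (⨆ k, f k x) = ((⨆ k, f k x).toReal : EReal) := (EReal.coe_toReal hx₁ hx₂).symm
  have hle (l) (hl : l ∈ stdSimplex ℝ (Fin n)) (y : X) :
      ∑ k, smul0 (l k) (f k y) ≤ ⨆ k, f k y :=
    sum_smul0_le_iSup hl (hnb · y)
  ext p
  simp only [mem_iUnion, mem_ofPred_eq, exists_prop]
  constructor
  · intro hp
    rw [mem_esubdiff_zero_iff (g := fun z => ⨆ k, f k z) hc] at hp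
    obtain ⟨l, hl, hlp⟩ := exists_mem_stdSimplex_forall_le_sum_smul0 hnb hconv
      (fun k => ne_top_of_le_ne_top hx₁ (le_iSup (f · x) k)) hp
    have hact : ∑ k, smul0 (l k) (f k x) = ⨆ k, f k x :=
      (hle l hl x).antisymm (hc ▸ by simpa using hlp x)
    refine ⟨l, ⟨hl.1, hl.2, hact⟩, ?_⟩
    rwa [mem_esubdiff_zero_iff (g := fun z => ∑ k, smul0 (l k) (f k z)) (hact.trans hc)]
  · rintro ⟨l, ⟨hl₀, hl₁, hact⟩, hp⟩
    exact esubdiff_subset_of_le_of_eq (hle l ⟨hl₀, hl₁⟩) hact hp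

/-- `∂f(x) = ⋃ {∂f_λ(x) : λ ∈ Δ_n, f_λ(x) = f(x)}` for
`f = max_k f_k` with `f(x)` finite. -/
theorem stmt10 {X : Type*} [NormedAddCommGroup X] [NormedSpace ℝ X]
    (n : ℕ) (hn : 0 < n) (f : Fin n → X → EReal)
    (hnb : ∀ k x, f k x ≠ ⊥) (hpr : ∀ k, ∃ x, f k x ≠ ⊤)
    (hconv : ∀ k, IsConvexEFn (f k))
    (x : X) (hx₁ : (⨆ k, f k x) ≠ ⊤) (hx₂ : (⨆ k, f k x) ≠ ⊥) :
    esubdiff (fun z => ⨆ k, f k z) x 0 =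
      ⋃ l ∈ {l : Fin n → ℝ | (∀ k, 0 ≤ l k) ∧ (∑ k, l k = 1) ∧
          (∑ k, smul0 (l k) (f k x)) = ⨆ k, f k x},
        esubdiff (fun z => ∑ k, smul0 (l k) (f k z)) x 0 :=
  stmt10_general n hn f hnb hconv x hx₁ hx₂
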